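/- For natural numbers j > k and n = 2m with k ≤ j ≤ n, the identity Σ_{ℓ≥0} [C(n−j, m−ℓ)/C(n−k−1, m−ℓ)] · C(2ℓ+1, k+1) · C(j+1, 2ℓ+1) = C(j+1, k+1) holds, where the sum is over those ℓ with C(n−k−1, m−ℓ) ≠ 0; and for j = k the sum equals 1 + (−1)^k. -/

import Mathlib

/-!
Put `r = j - k - 1` and `t = 2m - k - 1`. The two product rules
`C(n-b, a) C(n, b) = C(n-a, b) C(n, a)` and `C(n, K) C(K, s) = C(n, s) C(n-s, K-s)` turn the
`ℓ`-th summand into `C(m+ℓ-k-1, r) C(r+1, 2ℓ-k) · C(j+1, k+1) / C(t, r)`, so for `k < j` it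
suffices that `∑ ℓ, C(m+ℓ-k-1, r) C(r+1, 2ℓ-k) = C(t, r)`.

Reindexing by `i = 2ℓ - k`, this sum is `((1+E)^(r+1) φ)(t)`, where `E` shifts sequences and
`φ(u) = C(⌊u/2⌋, r)` for odd `u`, `φ(u) = 0` for even `u`. Now `(1+E) φ = ψ_r` with
`ψ_r(u) = C(⌊u/2⌋, r)`, and `(E²-1) ψ_(r+1) = ψ_r` by Pascal's rule; since
`(E-1)(1+E)^(r+1) = (1+E)^r (E²-1)`, induction on `r` shows `(1+E)^r ψ_r = C(·, r)`.

For `j = k` only `2ℓ = k` contributes, with the ratio `C(2c, c) / C(2c-1, c) = 2`.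
-/

/-- Binomial coefficient for integer arguments, with the convention that
`C a b = 0` when `b < 0` or `b > a`. -/
def C (a b : ℤ) : ℤ := if 0 ≤ b ∧ b ≤ a then (a.toNat.choose b.toNat : ℤ) else 0

open Finset

lemma C_natCast (a b : ℕ) : C a b = a.choose b := by
  unfold C
  split_ifs with h
  · simp
  · rw [Nat.choose_eq_zero_of_lt (by omega), Nat.cast_zero]

lemma C_eq_zero_of_lt {a b : ℤ} (h : a < b) : C a b = 0 :=
  if_neg (by omega)

lemma C_eq_zero_of_neg {a b : ℤ} (h : b < 0) : C a b = 0 :=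
  if_neg (by omega)

lemma C_pos {a b : ℤ} (h₀ : 0 ≤ b) (h₁ : b ≤ a) : 0 < C a b := by
  rw [C, if_pos ⟨h₀, h₁⟩]
  exact_mod_cast Nat.choose_pos (by omega)

lemma C_symm_add (a b : ℤ) : C (a + b) a = C (a + b) b := by
  rcases lt_or_ge a 0 with ha | ha
  · rw [C_eq_zero_of_neg ha, C_eq_zero_of_lt (by omega)]
  rcases lt_or_ge b 0 with hb | hb
  · rw [C_eq_zero_of_neg hb, C_eq_zero_of_lt (by omega)]
  lift a to ℕ using ha
  lift b to ℕ using hb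
  rw [← Nat.cast_add, C_natCast, C_natCast, Nat.choose_symm_add]

lemma C_mul (n k s : ℤ) : C n k * C k s = C n s * C (n - s) (k - s) := by
  rcases lt_or_ge s 0 with hs | hs
  · rw [C_eq_zero_of_neg hs, C_eq_zero_of_neg hs, mul_zero, zero_mul]
  rcases lt_or_ge k s with hks | hks
  · rw [C_eq_zero_of_lt hks, C_eq_zero_of_neg (a := n - s) (sub_neg.2 hks), mul_zero, mul_zero]
  rcases lt_or_ge n k with hnk | hnk
  · rw [C_eq_zero_of_lt hnk, C_eq_zero_of_lt (sub_lt_sub_right hnk s), zero_mul, mul_zero]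
  lift s to ℕ using hs
  lift k to ℕ using (by omega)
  lift n to ℕ using (by omega)
  rw [← Nat.cast_sub (by omega), ← Nat.cast_sub (by omega)]
  simp only [C_natCast]
  exact_mod_cast Nat.choose_mul (by omega)

lemma C_sub_mul_C (n a b : ℤ) : C (n - b) a * C n b = C (n - a) b * C n a := by
  calc C (n - b) a * C n b = C n (a + b) * C (a + b) b := by
        rw [C_mul, add_sub_cancel_right, mul_comm]
    _ = C n (a + b) * C (a + b) a := by rw [C_symm_add]
    _ = C (n - a) b * C n a := by rw [C_mul, add_sub_cancel_left, mul_comm]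

lemma C_mul_C_swap {a b : ℤ} (ha : 0 ≤ a) : C a b * C b a = if a = b then 1 else 0 := by
  split_ifs with h
  · subst h
    lift a to ℕ using ha
    rw [C_natCast, Nat.choose_self, Nat.cast_one, one_mul]
  · rcases lt_or_gt_of_ne h with h | h
    · rw [C_eq_zero_of_lt h, zero_mul]
    · rw [C_eq_zero_of_lt h, mul_zero]

lemma C_two_mul_self {c : ℤ} (hc : 0 < c) : C (2 * c) c = 2 * C (2 * c - 1) c := by
  obtain ⟨d, rfl⟩ : ∃ d : ℕ, c = d + 1 := ⟨c.toNat - 1, by omega⟩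
  rw [show 2 * ((d : ℤ) + 1) - 1 = ((2 * d + 1 : ℕ) : ℤ) by push_cast; ring,
    show 2 * ((d : ℤ) + 1) = ((2 * d + 1 + 1 : ℕ) : ℤ) by push_cast; ring,
    show (d : ℤ) + 1 = ((d + 1 : ℕ) : ℤ) by push_cast; ring, C_natCast, C_natCast,
    Nat.choose_succ_succ', ← Nat.choose_symm_half]
  push_cast
  ring

def shift : Module.End ℤ (ℕ → ℤ) := LinearMap.funLeft ℤ ℤ (· + 1)

lemma shift_apply (f : ℕ → ℤ) (u : ℕ) : shift f u = f (u + 1) := rfl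

lemma shift_pow_apply (i : ℕ) (f : ℕ → ℤ) (u : ℕ) : (shift ^ i) f u = f (u + i) := by
  induction i generalizing f with
  | zero => rfl
  | succ i ih => rw [pow_succ, Module.End.mul_apply, ih]; rfl

lemma shift_add_one_pow_apply (n : ℕ) (f : ℕ → ℤ) (u : ℕ) :
    ((shift + 1) ^ n) f u = ∑ i ∈ range (n + 1), (n.choose i : ℤ) * f (u + i) := by
  simp [(Commute.one_right shift).add_pow, LinearMap.sum_apply, shift_pow_apply, mul_comm]

def chooseHalf (r u : ℕ) : ℤ := ((u / 2).choose r : ℤ)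

def chooseHalfOdd (r u : ℕ) : ℤ := if Odd u then chooseHalf r u else 0

lemma shift_sq_sub_one_chooseHalf (r : ℕ) :
    (shift ^ 2 - 1 : Module.End ℤ (ℕ → ℤ)) (chooseHalf (r + 1)) = chooseHalf r := by
  ext u
  simp [shift_pow_apply, chooseHalf, Nat.add_div_right, Nat.choose_succ_succ']

lemma shift_add_one_chooseHalfOdd (r : ℕ) :
    (shift + 1) (chooseHalfOdd r) = chooseHalf r := by
  ext u
  rcases Nat.even_or_odd u with hu | hu
  · have h1 : (u + 1) / 2 = u / 2 := by rcases hu with ⟨a, rfl⟩; omega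
    simp [shift_apply, chooseHalfOdd, chooseHalf, hu.add_one, Nat.not_odd_iff_even.2 hu, h1]
  · simp [shift_apply, chooseHalfOdd, chooseHalf, hu, Nat.not_odd_iff_even.2 hu.add_one]

open Polynomial in
theorem shift_add_one_pow_chooseHalf (r : ℕ) :
    ((shift + 1) ^ r) (chooseHalf r) = fun t => (t.choose r : ℤ) := by
  induction r with
  | zero => ext t; simp [chooseHalf]
  | succ r ih =>
    set G := ((shift + 1) ^ (r + 1)) (chooseHalf (r + 1))
    have hdiff : ∀ t, G (t + 1) = G t + t.choose r := by
      have key : (shift - 1) * (shift + 1) ^ (r + 1) = (shift + 1) ^ r * (shift ^ 2 - 1) := by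
        simpa using congrArg (aeval shift)
          (show (X - 1) * (X + 1) ^ (r + 1) = (X + 1) ^ r * (X ^ 2 - 1 : ℤ[X]) by ring)
      intro t
      have := congrFun (congrArg (· (chooseHalf (r + 1))) key) t
      simp only [Module.End.mul_apply, shift_sq_sub_one_chooseHalf, ih] at this
      simp [G, ← this, shift_apply]
    have hzero : G 0 = 0 := by
      simp only [G, shift_add_one_pow_apply]
      refine sum_eq_zero fun i hi => ?_
      have : (0 + i) / 2 < r + 1 := by rw [mem_range] at hi; omega
      rw [chooseHalf, Nat.choose_eq_zero_of_lt this, Nat.cast_zero, mul_zero]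
    ext t
    induction t with
    | zero => simpa using hzero
    | succ t iht => rw [hdiff, iht, Nat.choose_succ_succ', Nat.cast_add, add_comm]

theorem sum_choose_mul_chooseHalfOdd (r t : ℕ) :
    ∑ i ∈ range (r + 2), ((r + 1).choose i : ℤ) * chooseHalfOdd r (t + i) = t.choose r := by
  rw [← shift_add_one_pow_apply, pow_succ, Module.End.mul_apply, shift_add_one_chooseHalfOdd,
    shift_add_one_pow_chooseHalf]

lemma C_mul_C_eq_choose_mul_chooseHalfOdd {m k r ℓ : ℕ} (hk : k < 2 * m) (hℓ : k ≤ 2 * ℓ) :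
    C ((m : ℤ) + ℓ - k - 1) r * C ((r : ℤ) + 1) (2 * ℓ - k)
      = ((r + 1).choose (2 * ℓ - k) : ℤ) * chooseHalfOdd r (2 * m - k - 1 + (2 * ℓ - k)) := by
  have hodd : Odd (2 * m - k - 1 + (2 * ℓ - k)) := ⟨m + ℓ - k - 1, by omega⟩
  have hhalf : (2 * m - k - 1 + (2 * ℓ - k)) / 2 = m + ℓ - k - 1 := by omega
  rw [chooseHalfOdd, if_pos hodd, chooseHalf, hhalf, mul_comm,
    show (m : ℤ) + ℓ - k - 1 = ((m + ℓ - k - 1 : ℕ) : ℤ) by omega,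
    show (r : ℤ) + 1 = ((r + 1 : ℕ) : ℤ) by push_cast; ring,
    show (2 * ℓ : ℤ) - k = ((2 * ℓ - k : ℕ) : ℤ) by omega, C_natCast, C_natCast]

theorem sum_C_mul_C (m k r : ℕ) (h : k + r + 1 ≤ 2 * m) :
    ∑ ℓ ∈ range (m + 1), C ((m : ℤ) + ℓ - k - 1) r * C ((r : ℤ) + 1) (2 * ℓ - k)
      = C (2 * m - k - 1) r := by
  rw [show (2 * m : ℤ) - k - 1 = ((2 * m - k - 1 : ℕ) : ℤ) by omega, C_natCast,
    ← sum_choose_mul_chooseHalfOdd]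
  have hsupp : ∀ ℓ : ℕ, C ((m : ℤ) + ℓ - k - 1) r * C ((r : ℤ) + 1) (2 * ℓ - k) ≠ 0 →
      k ≤ 2 * ℓ ∧ 2 * ℓ ≤ k + r + 1 := by
    intro ℓ hℓ
    constructor <;> by_contra hlt <;> apply hℓ
    · rw [C_eq_zero_of_neg (a := (r : ℤ) + 1) (by omega), mul_zero]
    · rw [C_eq_zero_of_lt (a := (r : ℤ) + 1) (by omega), mul_zero]
  refine sum_bij_ne_zero (fun ℓ _ _ => 2 * ℓ - k)
    (fun ℓ _ hℓ => mem_range.2 (by have := hsupp ℓ hℓ; omega))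
    (fun ℓ₁ _ h₁ ℓ₂ _ h₂ heq => by have := hsupp ℓ₁ h₁; have := hsupp ℓ₂ h₂; omega)
    (fun i hi hi0 => ?_)
    (fun ℓ _ hℓ => C_mul_C_eq_choose_mul_chooseHalfOdd (by omega) (hsupp ℓ hℓ).1)
  have hodd : Odd (2 * m - k - 1 + i) := by
    by_contra hev
    exact hi0 (by rw [chooseHalfOdd, if_neg hev, mul_zero])
  obtain ⟨c, hc⟩ := hodd
  have hℓ : 2 * ((i + k) / 2) - k = i := by omega
  refine ⟨(i + k) / 2, mem_range.2 (by rw [mem_range] at hi; omega), ?_, hℓ⟩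
  rwa [C_mul_C_eq_choose_mul_chooseHalfOdd (by omega) (by omega), hℓ]

def ratioSummand (m j k ℓ : ℕ) : ℚ :=
  if (C ((2 * m : ℤ) - k - 1) ((m : ℤ) - ℓ) : ℚ) ≠ 0 then
    (C ((2 * m : ℤ) - j) ((m : ℤ) - ℓ) : ℚ) / (C ((2 * m : ℤ) - k - 1) ((m : ℤ) - ℓ) : ℚ)
      * (C ((2 * ℓ : ℤ) + 1) ((k : ℤ) + 1) : ℚ) * (C ((j : ℤ) + 1) ((2 * ℓ : ℤ) + 1) : ℚ)
  else 0

lemma ratioSummand_of_lt {m j k ℓ r : ℕ} (hr : j = k + r + 1) (hj : j ≤ 2 * m) (hℓ : ℓ ≤ m) :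
    ratioSummand m j k ℓ = (C ((m : ℤ) + ℓ - k - 1) r * C ((r : ℤ) + 1) (2 * ℓ - k) : ℤ)
      * ((C ((j : ℤ) + 1) ((k : ℤ) + 1) : ℚ) / C ((2 * m : ℤ) - k - 1) r) := by
  rw [ratioSummand]
  by_cases hd : k + 1 ≤ m + ℓ
  · have hD : 0 < C ((2 * m : ℤ) - k - 1) ((m : ℤ) - ℓ) := C_pos (by omega) (by omega)
    have hN : 0 < C ((2 * m : ℤ) - k - 1) r := C_pos (by omega) (by omega)
    have hcross := C_sub_mul_C ((2 * m : ℤ) - k - 1) ((m : ℤ) - ℓ) r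
    have hmul := C_mul ((j : ℤ) + 1) ((2 * ℓ : ℤ) + 1) ((k : ℤ) + 1)
    rw [show (2 * m : ℤ) - k - 1 - r = 2 * m - j by omega,
      show (2 * m : ℤ) - k - 1 - (m - ℓ) = m + ℓ - k - 1 by ring] at hcross
    rw [show (j : ℤ) + 1 - (k + 1) = r + 1 by omega,
      show (2 * ℓ : ℤ) + 1 - (k + 1) = 2 * ℓ - k by ring] at hmul
    qify at hD hN hcross hmul
    rw [if_pos hD.ne', Int.cast_mul]
    field_simp
    linear_combination
      (C ((2 * ℓ : ℤ) + 1) ((k : ℤ) + 1) * C ((j : ℤ) + 1) ((2 * ℓ : ℤ) + 1) : ℚ) * hcross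
        + (C ((m : ℤ) + ℓ - k - 1) r * C ((2 * m : ℤ) - k - 1) ((m : ℤ) - ℓ) : ℚ) * hmul
  · rw [C_eq_zero_of_lt (show (2 * m : ℤ) - k - 1 < m - ℓ by omega),
      C_eq_zero_of_lt (show (m : ℤ) + ℓ - k - 1 < r by omega)]
    simp

theorem sum_ratioSummand_of_lt {m j k : ℕ} (hkj : k < j) (hj : j ≤ 2 * m) :
    ∑ ℓ ∈ range (m + 1), ratioSummand m j k ℓ = C ((j : ℤ) + 1) ((k : ℤ) + 1) := by
  obtain ⟨r, hr⟩ : ∃ r, j = k + r + 1 := ⟨j - k - 1, by omega⟩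
  have hN : (C ((2 * m : ℤ) - k - 1) r : ℚ) ≠ 0 := by
    exact_mod_cast (C_pos (a := (2 * m : ℤ) - k - 1) (b := r) (by omega) (by omega)).ne'
  rw [sum_congr rfl fun ℓ hℓ => ratioSummand_of_lt hr hj (by rw [mem_range] at hℓ; omega),
    ← sum_mul, ← Int.cast_sum, sum_C_mul_C m k r (by omega), mul_div_cancel₀ _ hN]

lemma ratioSummand_self {m k ℓ : ℕ} (hk : k < 2 * m) :
    ratioSummand m k k ℓ = if 2 * ℓ = k then 2 else 0 := by
  have hcond : (2 * ℓ : ℤ) + 1 = k + 1 ↔ 2 * ℓ = k := by omega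
  rw [ratioSummand, mul_assoc, ← Int.cast_mul, C_mul_C_swap (by omega)]
  simp only [hcond]
  split_ifs with hD h h
  · have hcentral : C ((2 * m : ℤ) - k) (m - ℓ) = 2 * C ((2 * m : ℤ) - k - 1) (m - ℓ) := by
      rw [show (2 * m : ℤ) - k = 2 * ((m : ℤ) - ℓ) by omega]
      exact C_two_mul_self (by omega)
    rw [hcentral]
    push_cast
    field_simp
  · simp
  · exact absurd (by exact_mod_cast (C_pos (a := (2 * m : ℤ) - k - 1) (b := m - ℓ)
      (by omega) (by omega)).ne') hD
  · rfl

theorem sum_ratioSummand_self {m k : ℕ} (hk : k < 2 * m) :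
    ∑ ℓ ∈ range (m + 1), ratioSummand m k k ℓ = 1 + (-1 : ℚ) ^ k := by
  simp only [ratioSummand_self hk]
  rcases Nat.even_or_odd' k with ⟨a, rfl | rfl⟩
  · norm_num [show a < m + 1 by omega]
  · have : ∀ ℓ, 2 * ℓ ≠ 2 * a + 1 := by omega
    simp [this, pow_succ]

theorem binomial_ratio_sum_general (m j k : ℕ) (hk : k < 2 * m) (hj : j ≤ 2 * m) :
    (k < j →
      ∑ ℓ ∈ Finset.range (m + 1),
        (if (C ((2 * m : ℤ) - k - 1) ((m : ℤ) - ℓ) : ℚ) ≠ 0 then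
          (C ((2 * m : ℤ) - j) ((m : ℤ) - ℓ) : ℚ) / (C ((2 * m : ℤ) - k - 1) ((m : ℤ) - ℓ) : ℚ)
            * (C ((2 * ℓ : ℤ) + 1) ((k : ℤ) + 1) : ℚ) * (C ((j : ℤ) + 1) ((2 * ℓ : ℤ) + 1) : ℚ)
        else 0)
      = (C ((j : ℤ) + 1) ((k : ℤ) + 1) : ℚ)) ∧
    (j = k →
      ∑ ℓ ∈ Finset.range (m + 1),
        (if (C ((2 * m : ℤ) - k - 1) ((m : ℤ) - ℓ) : ℚ) ≠ 0 then
          (C ((2 * m : ℤ) - j) ((m : ℤ) - ℓ) : ℚ) / (C ((2 * m : ℤ) - k - 1) ((m : ℤ) - ℓ) : ℚ)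
            * (C ((2 * ℓ : ℤ) + 1) ((k : ℤ) + 1) : ℚ) * (C ((j : ℤ) + 1) ((2 * ℓ : ℤ) + 1) : ℚ)
        else 0)
      = 1 + (-1 : ℚ) ^ k) := by
  refine ⟨fun hkj => sum_ratioSummand_of_lt hkj hj, fun hjk => ?_⟩
  subst hjk
  exact sum_ratioSummand_self hk

/-- For `n = 2m`, `k < n`, `k ≤ j ≤ n`: the sum (over those `ℓ` with
`C(n−k−1, m−ℓ) ≠ 0`) of `[C(n−j, m−ℓ)/C(n−k−1, m−ℓ)] · C(2ℓ+1, k+1) · C(j+1, 2ℓ+1)`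
equals `C(j+1, k+1)` when `j > k`, and equals `1 + (−1)^k` when `j = k`. -/
theorem binomial_ratio_sum (m j k : ℕ) (hk : k < 2 * m) (hkj : k ≤ j) (hj : j ≤ 2 * m) :
    (k < j →
      ∑ ℓ ∈ Finset.range (m + 1),
        (if (C ((2 * m : ℤ) - k - 1) ((m : ℤ) - ℓ) : ℚ) ≠ 0 then
          (C ((2 * m : ℤ) - j) ((m : ℤ) - ℓ) : ℚ) / (C ((2 * m : ℤ) - k - 1) ((m : ℤ) - ℓ) : ℚ)
            * (C ((2 * ℓ : ℤ) + 1) ((k : ℤ) + 1) : ℚ) * (C ((j : ℤ) + 1) ((2 * ℓ : ℤ) + 1) : ℚ)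
        else 0)
      = (C ((j : ℤ) + 1) ((k : ℤ) + 1) : ℚ)) ∧
    (j = k →
      ∑ ℓ ∈ Finset.range (m + 1),
        (if (C ((2 * m : ℤ) - k - 1) ((m : ℤ) - ℓ) : ℚ) ≠ 0 then
          (C ((2 * m : ℤ) - j) ((m : ℤ) - ℓ) : ℚ) / (C ((2 * m : ℤ) - k - 1) ((m : ℤ) - ℓ) : ℚ)
            * (C ((2 * ℓ : ℤ) + 1) ((k : ℤ) + 1) : ℚ) * (C ((j : ℤ) + 1) ((2 * ℓ : ℤ) + 1) : ℚ)
        else 0)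
      = 1 + (-1 : ℚ) ^ k) :=
  binomial_ratio_sum_general m j k hk hj
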